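/- arXiv:2310.03323 — 4 statements merged into one kernel-verified Lean document; each statement's English description precedes it below -/
import Mathlib

section
/- For s ∈ (0,1) there exists a constant C_2 > 0, namely C_2 = ∫_{|η|_p ≤ p} |χ(η) - 1|^2 / |η|_p^{2s+1} dη, such that for every ξ ∈ Q_p with |ξ|_p ≥ p^{-N+1}, the quantity A_s(ξ) = ∫_{B_N} |χ(zξ) - 1|^2 / |z|_p^{2s+1} dz satisfies A_s(ξ) ≥ C_2 |ξ|_p^{2s}. -/
open MeasureTheory Filter Topology

open Classical in
/-- The p-adic fractional part of `x`: the unique rational `r ∈ [0,1)` with denominator a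
power of `p` such that `x - r` is a p-adic integer. -/
noncomputable def padicFract (p : ℕ) [Fact p.Prime] (x : ℚ_[p]) : ℚ :=
  if h : ∃ r : ℚ, ‖x - (r : ℚ_[p])‖ ≤ 1 ∧ 0 ≤ r ∧ r < 1 ∧ ∃ n : ℕ, (r * (p : ℚ) ^ n).den = 1
  then h.choose else 0

/-- The standard additive character `χ(x) = exp(2πi {x}_p)` of `ℚ_p`. -/
noncomputable def padicChar (p : ℕ) [Fact p.Prime] (x : ℚ_[p]) : ℂ :=
  Complex.exp (2 * Real.pi * Complex.I * ((padicFract p x : ℝ) : ℂ))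

noncomputable instance (p : ℕ) [Fact p.Prime] : MeasurableSpace ℚ_[p] := borel _
instance (p : ℕ) [Fact p.Prime] : BorelSpace ℚ_[p] := ⟨rfl⟩

/-!
Substituting `z = η / ξ` and using that Haar measure on `ℚ_p` scales by `‖c‖` under `x ↦ c x`,
the integral of `‖χ(zξ) - 1‖² / ‖z‖^{2s+1}` over `‖z‖ ≤ p / ‖ξ‖` equals `C₂ ‖ξ‖^{2s}` exactly.
For `‖ξ‖ ≥ p^{1-N}` this ball lies in `B_N`, and the integrand is nonnegative and continuous
(it vanishes near `0`, where `χ(zξ) = 1`), hence integrable on `B_N`. The scaling factor is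
forced by `ℤ_p` being the disjoint union of the `p` cosets `k + pℤ_p`. Finally `C₂ > 0` since
the integrand is nonzero at `1/p`, so its support meets `{‖η‖ ≤ p}` in a nonempty open set.
-/

open Metric
open scoped Pointwise NNReal ENNReal

lemma Rat.den_mul_pow_add_eq_one {r : ℚ} {m n : ℕ} (hr : (r * (m : ℚ) ^ n).den = 1) (k : ℕ) :
    (r * (m : ℚ) ^ (n + k)).den = 1 := by
  rw [pow_add, ← mul_assoc, ← Rat.den_eq_one_iff _ |>.mp hr]
  exact_mod_cast Rat.den_intCast ((r * (m : ℚ) ^ n).num * (m : ℤ) ^ k)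

lemma setOf_norm_le_eq_closedBall {E : Type*} [SeminormedAddCommGroup E] (r : ℝ) :
    {x : E | ‖x‖ ≤ r} = closedBall 0 r := by
  ext; simp

variable {p : ℕ} [Fact p.Prime]

lemma Rat.eq_zero_of_norm_padic_le_one {q : ℚ} {n : ℕ} (hn : (q * (p : ℚ) ^ n).den = 1)
    (hq : ‖(q : ℚ_[p])‖ ≤ 1) (h : |q| < 1) : q = 0 := by
  set m := (q * (p : ℚ) ^ n).num
  have hm : (m : ℚ) = q * (p : ℚ) ^ n := Rat.den_eq_one_iff _ |>.mp hn
  have hm_norm : ‖(m : ℚ_[p])‖ ≤ (p : ℝ) ^ (-(n : ℤ)) := by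
    have : (m : ℚ_[p]) = (q : ℚ_[p]) * (p : ℚ_[p]) ^ n := by
      exact_mod_cast congrArg ((↑) : ℚ → ℚ_[p]) hm
    rw [this, norm_mul, Padic.norm_p_pow]
    exact mul_le_of_le_one_left (by positivity) hq
  obtain ⟨d, hd⟩ := (Padic.norm_int_le_pow_iff_dvd m n).mp hm_norm
  have hp : (p : ℚ) ^ n ≠ 0 := pow_ne_zero _ (Nat.cast_ne_zero.mpr (Fact.out : p.Prime).ne_zero)
  have hqd : q = d := by
    rw [← mul_div_cancel_right₀ q hp, ← hm, hd]; push_cast; field_simp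
  rw [hqd] at h ⊢
  exact_mod_cast Int.abs_lt_one_iff.mp (by exact_mod_cast h)

lemma padicFract_eq {x : ℚ_[p]} {r : ℚ} (hx : ‖x - r‖ ≤ 1) (h0 : 0 ≤ r) (h1 : r < 1)
    (hr : ∃ n : ℕ, (r * (p : ℚ) ^ n).den = 1) : padicFract p x = r := by
  have hex : ∃ r : ℚ, ‖x - (r : ℚ_[p])‖ ≤ 1 ∧ 0 ≤ r ∧ r < 1 ∧
      ∃ n : ℕ, (r * (p : ℚ) ^ n).den = 1 := ⟨r, hx, h0, h1, hr⟩
  rw [padicFract, dif_pos hex]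
  obtain ⟨hx', h0', h1', n', hn'⟩ := hex.choose_spec
  obtain ⟨n, hn⟩ := hr
  set r' := hex.choose
  have hdiff : ((r' - r) * (p : ℚ) ^ (n' + n)).den = 1 := by
    rw [sub_mul, ← Rat.den_eq_one_iff _ |>.mp (Rat.den_mul_pow_add_eq_one hn' n),
      add_comm n', ← Rat.den_eq_one_iff _ |>.mp (Rat.den_mul_pow_add_eq_one hn n')]
    exact_mod_cast Rat.den_intCast ((r' * (p : ℚ) ^ (n' + n)).num - (r * (p : ℚ) ^ (n + n')).num)
  have hnorm : ‖((r' - r : ℚ) : ℚ_[p])‖ ≤ 1 := by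
    have : ((r' - r : ℚ) : ℚ_[p]) = (x - r) + -(x - r') := by push_cast; ring
    rw [this]
    exact (Padic.nonarchimedean _ _).trans (max_le hx (by rwa [norm_neg]))
  exact sub_eq_zero.mp (Rat.eq_zero_of_norm_padic_le_one hdiff hnorm
    (abs_sub_lt_iff.mpr ⟨by linarith, by linarith⟩))

lemma padicFract_eq_of_norm_sub_le_one {x y : ℚ_[p]} (h : ‖x - y‖ ≤ 1) :
    padicFract p x = padicFract p y := by
  have hxy : closedBall x 1 = closedBall y 1 :=
    IsUltrametricDist.closedBall_eq_of_mem (by rwa [mem_closedBall', dist_eq_norm])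
  have : (fun r : ℚ => ‖x - r‖ ≤ 1 ∧ 0 ≤ r ∧ r < 1 ∧ ∃ n : ℕ, (r * (p : ℚ) ^ n).den = 1) =
      fun r : ℚ => ‖y - r‖ ≤ 1 ∧ 0 ≤ r ∧ r < 1 ∧ ∃ n : ℕ, (r * (p : ℚ) ^ n).den = 1 := by
    simp only [← mem_closedBall_iff_norm', hxy]
  rw [padicFract, padicFract, this]

lemma padicChar_eq_of_norm_sub_le_one {x y : ℚ_[p]} (h : ‖x - y‖ ≤ 1) :
    padicChar p x = padicChar p y := by
  rw [padicChar, padicChar, padicFract_eq_of_norm_sub_le_one h]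

lemma padicChar_eq_one_of_norm_le_one {x : ℚ_[p]} (hx : ‖x‖ ≤ 1) : padicChar p x = 1 := by
  rw [padicChar, padicFract_eq (r := 0) (by simpa using hx) le_rfl one_pos ⟨0, by simp⟩]
  simp

lemma continuous_padicChar : Continuous (padicChar p) :=
  continuous_iff_continuousAt.mpr fun x => continuousAt_const.congr <| by
    filter_upwards [closedBall_mem_nhds x one_pos] with y hy
    exact (padicChar_eq_of_norm_sub_le_one (mem_closedBall_iff_norm.mp hy)).symm

lemma padicChar_inv_p_ne_one : padicChar p (p : ℚ_[p])⁻¹ ≠ 1 := by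
  have hp := (Fact.out : p.Prime)
  have hfract : padicFract p (p : ℚ_[p])⁻¹ = 1 / p := by
    refine padicFract_eq (by simp) (by positivity) ?_ ⟨1, ?_⟩
    · rw [div_lt_one (by exact_mod_cast hp.pos)]; exact_mod_cast hp.one_lt
    · rw [pow_one, one_div_mul_cancel (by exact_mod_cast hp.ne_zero)]; rfl
  have hprim := Complex.isPrimitiveRoot_exp p hp.ne_zero
  rw [padicChar, hfract]
  convert hprim.ne_one hp.one_lt using 2
  push_cast; ring

lemma closedBall_zero_one_eq_biUnion :
    closedBall (0 : ℚ_[p]) 1 = ⋃ k ∈ Finset.range p, closedBall (k : ℚ_[p]) (p : ℝ)⁻¹ := by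
  ext x
  simp only [Set.mem_iUnion, Finset.mem_range, exists_prop, mem_closedBall_iff_norm, sub_zero]
  constructor
  · intro hx
    set v : ℤ_[p] := ⟨x, hx⟩
    refine ⟨v.appr 1, by simpa using v.appr_lt 1, ?_⟩
    have := (PadicInt.norm_le_pow_iff_mem_span_pow _ 1).mpr (v.appr_spec 1)
    simpa [PadicInt.norm_def] using this
  · rintro ⟨k, -, hk⟩
    calc ‖x‖ = ‖(x - k) + k‖ := by rw [sub_add_cancel]
      _ ≤ max ‖x - k‖ ‖(k : ℚ_[p])‖ := Padic.nonarchimedean _ _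
      _ ≤ 1 := max_le
          (hk.trans (inv_le_one_of_one_le₀ (by exact_mod_cast (Fact.out : p.Prime).one_le)))
          (IsUltrametricDist.norm_natCast_le_one _ k)

lemma pairwiseDisjoint_closedBall_natCast :
    (Finset.range p : Set ℕ).PairwiseDisjoint fun k => closedBall (k : ℚ_[p]) (p : ℝ)⁻¹ := by
  intro k hk k' hk' hne
  simp only [Finset.coe_range, Set.mem_Iio] at hk hk'
  refine Set.disjoint_left.mpr fun x hx hx' => hne ?_
  have hdist : ‖(((k - k' : ℤ)) : ℚ_[p])‖ < 1 := by
    calc ‖(((k - k' : ℤ)) : ℚ_[p])‖ = dist (k : ℚ_[p]) k' := by push_cast; rw [dist_eq_norm]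
      _ ≤ max (dist (k : ℚ_[p]) x) (dist x k') := IsUltrametricDist.dist_triangle_max _ _ _
      _ ≤ (p : ℝ)⁻¹ := max_le (mem_closedBall'.mp hx) hx'
      _ < 1 := inv_lt_one_of_one_lt₀ (by exact_mod_cast (Fact.out : p.Prime).one_lt)
  have := Int.eq_zero_of_abs_lt_dvd (Padic.norm_intCast_lt_one_iff.mp hdist)
    (abs_lt.mpr ⟨by omega, by omega⟩)
  omega

lemma measure_closedBall_zero_one (μ : Measure ℚ_[p]) [μ.IsAddHaarMeasure] :
    μ (closedBall 0 1) = p * μ (closedBall 0 (p : ℝ)⁻¹) := by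
  rw [closedBall_zero_one_eq_biUnion, measure_biUnion_finset pairwiseDisjoint_closedBall_natCast
    fun _ _ => measurableSet_closedBall]
  simp [Measure.addHaar_closedBall_center]

lemma units_smul_closedBall_zero_one (c : ℚ_[p]ˣ) :
    c • closedBall (0 : ℚ_[p]) 1 = closedBall 0 ‖(c : ℚ_[p])‖ := by
  rw [Units.smul_def, smul_closedBall' c.ne_zero, smul_zero, mul_one]

lemma distribHaarChar_padic_eq_of_norm_eq {c d : ℚ_[p]ˣ} (h : ‖(c : ℚ_[p])‖ = ‖(d : ℚ_[p])‖) :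
    distribHaarChar ℚ_[p] c = distribHaarChar ℚ_[p] d := by
  set μ : Measure ℚ_[p] := Measure.addHaar
  have h0 : μ (closedBall 0 1) ≠ 0 := (measure_closedBall_pos μ 0 one_pos).ne'
  have htop : μ (closedBall 0 1) ≠ ⊤ := measure_closedBall_lt_top.ne
  refine ENNReal.coe_injective ?_
  rw [distribHaarChar_eq_div h0 htop, distribHaarChar_eq_div h0 htop,
    units_smul_closedBall_zero_one, units_smul_closedBall_zero_one, h]

lemma distribHaarChar_padic_p (hp : (p : ℚ_[p]) ≠ 0) :
    distribHaarChar ℚ_[p] (Units.mk0 (p : ℚ_[p]) hp) = ‖(p : ℚ_[p])‖₊ := by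
  set μ : Measure ℚ_[p] := Measure.addHaar
  have h0 : μ (closedBall 0 1) ≠ 0 := (measure_closedBall_pos μ 0 one_pos).ne'
  have htop : μ (closedBall 0 1) ≠ ⊤ := measure_closedBall_lt_top.ne
  refine distribHaarChar_eq_of_measure_smul_eq_mul h0 htop ?_
  rw [units_smul_closedBall_zero_one, measure_closedBall_zero_one, Units.val_mk0, ← mul_assoc]
  have hnorm : (‖(p : ℚ_[p])‖₊ : ℝ≥0∞) * p = 1 := by
    rw [show ‖(p : ℚ_[p])‖₊ = (p : ℝ≥0)⁻¹ from NNReal.eq (by simp [Padic.norm_p]),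
      ENNReal.coe_inv (by exact_mod_cast (Fact.out : p.Prime).ne_zero), ENNReal.coe_natCast,
      ENNReal.inv_mul_cancel (by exact_mod_cast (Fact.out : p.Prime).ne_zero)
        (ENNReal.natCast_ne_top p)]
  rw [hnorm, one_mul, Padic.norm_p]

/-- Both sides are characters of `ℚ_[p]ˣ` that only depend on `‖c‖`, so it suffices to compare
them at `p`. -/
lemma distribHaarChar_padic (c : ℚ_[p]ˣ) : distribHaarChar ℚ_[p] c = ‖(c : ℚ_[p])‖₊ := by
  have hp : (p : ℚ_[p]) ≠ 0 := Nat.cast_ne_zero.mpr (Fact.out : p.Prime).ne_zero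
  set v := (c : ℚ_[p]).valuation
  have hc : ‖(c : ℚ_[p])‖ = ‖(p : ℚ_[p]) ^ v‖ := by
    rw [Padic.norm_eq_zpow_neg_valuation c.ne_zero, Padic.norm_p_zpow]
  have hpv : ((Units.mk0 (p : ℚ_[p]) hp ^ v : ℚ_[p]ˣ) : ℚ_[p]) = (p : ℚ_[p]) ^ v := by simp
  rw [distribHaarChar_padic_eq_of_norm_eq (d := Units.mk0 (p : ℚ_[p]) hp ^ v) (by rw [hpv, hc]),
    map_zpow, distribHaarChar_padic_p, ← nnnorm_zpow]
  exact NNReal.eq hc.symm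

lemma map_mul_left_padic (μ : Measure ℚ_[p]) [μ.IsAddHaarMeasure] {c : ℚ_[p]} (hc : c ≠ 0) :
    μ.map (c * ·) = ‖c‖₊⁻¹ • μ := by
  ext s hs
  have hpre : (c * ·) ⁻¹' s = (Units.mk0 c hc)⁻¹ • s := Set.preimage_smul (Units.mk0 c hc) s
  rw [Measure.map_apply (measurable_const_mul c) hs, hpre, ← distribHaarChar_mul, map_inv,
    distribHaarChar_padic, Units.val_mk0, Measure.smul_apply, ENNReal.smul_def, smul_eq_mul]

lemma setIntegral_comp_mul_left_padic {E : Type*} [NormedAddCommGroup E] [NormedSpace ℝ E]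
    (μ : Measure ℚ_[p]) [μ.IsAddHaarMeasure] {c : ℚ_[p]} (hc : c ≠ 0) (f : ℚ_[p] → E)
    (s : Set ℚ_[p]) : ∫ x in (c * ·) ⁻¹' s, f (c * x) ∂μ = ‖c‖⁻¹ • ∫ y in s, f y ∂μ := by
  rw [← (measurableEmbedding_mulLeft₀ hc).setIntegral_map, map_mul_left_padic μ hc,
    Measure.restrict_smul, integral_smul_nnreal_measure, NNReal.smul_def, NNReal.coe_inv,
    coe_nnnorm]

lemma setIntegral_div_norm_rpow_comp_mul (μ : Measure ℚ_[p]) [μ.IsAddHaarMeasure]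
    (g : ℚ_[p] → ℝ) (a R : ℝ) {ξ : ℚ_[p]} (hξ : ξ ≠ 0) :
    ∫ z in {z : ℚ_[p] | ‖z‖ ≤ R * ‖ξ‖⁻¹}, g (z * ξ) / ‖z‖ ^ a ∂μ =
      ‖ξ‖ ^ (a - 1) * ∫ η in {η : ℚ_[p] | ‖η‖ ≤ R}, g η / ‖η‖ ^ a ∂μ := by
  have hξ' : 0 < ‖ξ‖ := norm_pos_iff.mpr hξ
  have hpre : (ξ⁻¹ * ·) ⁻¹' {z : ℚ_[p] | ‖z‖ ≤ R * ‖ξ‖⁻¹} = {η | ‖η‖ ≤ R} := by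
    ext η
    simp [norm_mul, mul_comm ‖ξ‖⁻¹, hξ']
  have hcomp : ∀ η : ℚ_[p], g (ξ⁻¹ * η * ξ) / ‖ξ⁻¹ * η‖ ^ a = ‖ξ‖ ^ a * (g η / ‖η‖ ^ a) := by
    intro η
    rw [mul_comm ξ⁻¹, mul_assoc, inv_mul_cancel₀ hξ, mul_one, norm_mul, norm_inv,
      Real.mul_rpow (norm_nonneg _) (inv_nonneg.mpr hξ'.le), Real.inv_rpow hξ'.le]
    field_simp
  have h := setIntegral_comp_mul_left_padic μ (inv_ne_zero hξ) (fun z => g (z * ξ) / ‖z‖ ^ a)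
    {z | ‖z‖ ≤ R * ‖ξ‖⁻¹}
  simp only [hpre, hcomp, integral_const_mul, norm_inv, inv_inv, smul_eq_mul] at h
  rw [Real.rpow_sub_one hξ'.ne', div_mul_eq_mul_div, h, mul_div_cancel_left₀ _ hξ'.ne']

lemma continuous_norm_padicChar_mul_sub_one_sq_div (ξ : ℚ_[p]) (a : ℝ) :
    Continuous fun z : ℚ_[p] => ‖padicChar p (z * ξ) - 1‖ ^ 2 / ‖z‖ ^ a := by
  refine continuous_iff_continuousAt.mpr fun z => ?_
  rcases eq_or_ne z 0 with rfl | hz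
  · have hξ : Tendsto (· * ξ) (𝓝 (0 : ℚ_[p])) (𝓝 0) := by
      simpa using (continuous_mul_const ξ).tendsto 0
    refine (continuousAt_const (y := (0 : ℝ))).congr ?_
    filter_upwards [hξ (closedBall_mem_nhds 0 one_pos)] with w hw
    rw [padicChar_eq_one_of_norm_le_one (mem_closedBall_zero_iff.mp hw)]
    simp
  · have hz' : 0 < ‖z‖ := norm_pos_iff.mpr hz
    exact (((continuous_padicChar.comp (continuous_mul_const ξ)).sub
      continuous_const).norm.pow 2).continuousAt.div
      (continuous_norm.continuousAt.rpow_const (Or.inl hz'.ne')) (Real.rpow_pos_of_pos hz' a).ne'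

lemma setIntegral_norm_padicChar_sub_one_sq_div_pos (μ : Measure ℚ_[p]) [μ.IsAddHaarMeasure]
    (a : ℝ) : 0 < ∫ η in {η : ℚ_[p] | ‖η‖ ≤ (p : ℝ)}, ‖padicChar p η - 1‖ ^ 2 / ‖η‖ ^ a ∂μ := by
  have hp : (0 : ℝ) < p := by exact_mod_cast (Fact.out : p.Prime).pos
  have hf : Continuous fun η : ℚ_[p] => ‖padicChar p η - 1‖ ^ 2 / ‖η‖ ^ a := by
    simpa using continuous_norm_padicChar_mul_sub_one_sq_div (p := p) 1 a
  rw [setOf_norm_le_eq_closedBall, setIntegral_pos_iff_support_of_nonneg_ae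
    (ae_of_all _ fun η => by positivity)
    (hf.continuousOn.integrableOn_compact (isCompact_closedBall 0 _))]
  refine (hf.isOpen_support.inter (IsUltrametricDist.isOpen_closedBall 0 hp.ne')).measure_pos μ
    ⟨(p : ℚ_[p])⁻¹, ?_, by simp [Padic.norm_p]⟩
  have hnorm : 0 < ‖(p : ℚ_[p])⁻¹‖ := by simp [Padic.norm_p, hp]
  exact div_ne_zero (pow_ne_zero _ (norm_ne_zero_iff.mpr (sub_ne_zero.mpr padicChar_inv_p_ne_one)))
    (Real.rpow_pos_of_pos hnorm a).ne'

theorem padic_As_lower_bound_general (p : ℕ) [Fact p.Prime] (N : ℤ) (s : ℝ)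
    (μ : Measure ℚ_[p]) [μ.IsAddHaarMeasure] :
    0 < (∫ η in {η : ℚ_[p] | ‖η‖ ≤ (p : ℝ)},
          ‖padicChar p η - 1‖ ^ 2 / ‖η‖ ^ (2 * s + 1) ∂μ) ∧
    ∀ ξ : ℚ_[p], (p : ℝ) ^ (-N + 1) ≤ ‖ξ‖ →
      (∫ η in {η : ℚ_[p] | ‖η‖ ≤ (p : ℝ)},
          ‖padicChar p η - 1‖ ^ 2 / ‖η‖ ^ (2 * s + 1) ∂μ) * ‖ξ‖ ^ (2 * s) ≤
        ∫ z in {z : ℚ_[p] | ‖z‖ ≤ (p : ℝ) ^ N},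
          ‖padicChar p (z * ξ) - 1‖ ^ 2 / ‖z‖ ^ (2 * s + 1) ∂μ := by
  refine ⟨setIntegral_norm_padicChar_sub_one_sq_div_pos μ _, fun ξ hξ => ?_⟩
  have hp : (0 : ℝ) < p := by exact_mod_cast (Fact.out : p.Prime).pos
  have hξ0 : ξ ≠ 0 := norm_pos_iff.mp ((zpow_pos hp _).trans_le hξ)
  have hradius : (p : ℝ) * ‖ξ‖⁻¹ ≤ (p : ℝ) ^ N :=
    calc (p : ℝ) * ‖ξ‖⁻¹ ≤ p * ((p : ℝ) ^ (-N + 1))⁻¹ := by gcongr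
      _ = (p : ℝ) ^ N := by rw [← zpow_neg, ← zpow_one_add₀ hp.ne']; ring_nf
  have hscale := setIntegral_div_norm_rpow_comp_mul μ (fun η => ‖padicChar p η - 1‖ ^ 2)
    (2 * s + 1) p hξ0
  rw [add_sub_cancel_right] at hscale
  rw [mul_comm, ← hscale]
  refine setIntegral_mono_set ?_ (ae_of_all _ fun z => by positivity)
    (Filter.Eventually.of_forall fun z (hz : ‖z‖ ≤ _) => hz.trans hradius)
  rw [setOf_norm_le_eq_closedBall]
  exact (continuous_norm_padicChar_mul_sub_one_sq_div ξ _).continuousOn.integrableOn_compact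
    (isCompact_closedBall 0 _)

/-- Lower bound for `A_s(ξ)`: with
`C₂ = ∫_{|η|_p ≤ p} |χ(η)-1|²/|η|_p^{2s+1} dη` one has `C₂ > 0` and
`A_s(ξ) = ∫_{B_N} |χ(zξ)-1|²/|z|_p^{2s+1} dz ≥ C₂ |ξ|_p^{2s}`
for all `ξ` with `|ξ|_p ≥ p^{-N+1}`. -/
theorem padic_As_lower_bound (p : ℕ) [Fact p.Prime] (N : ℤ) (s : ℝ)
    (hs : s ∈ Set.Ioo (0 : ℝ) 1)
    (μ : Measure ℚ_[p]) [μ.IsAddHaarMeasure] (hμ : μ {x : ℚ_[p] | ‖x‖ ≤ 1} = 1) :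
    0 < (∫ η in {η : ℚ_[p] | ‖η‖ ≤ (p : ℝ)},
          ‖padicChar p η - 1‖ ^ 2 / ‖η‖ ^ (2 * s + 1) ∂μ) ∧
    ∀ ξ : ℚ_[p], (p : ℝ) ^ (-N + 1) ≤ ‖ξ‖ →
      (∫ η in {η : ℚ_[p] | ‖η‖ ≤ (p : ℝ)},
          ‖padicChar p η - 1‖ ^ 2 / ‖η‖ ^ (2 * s + 1) ∂μ) * ‖ξ‖ ^ (2 * s) ≤
        ∫ z in {z : ℚ_[p] | ‖z‖ ≤ (p : ℝ) ^ N},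
          ‖padicChar p (z * ξ) - 1‖ ^ 2 / ‖z‖ ^ (2 * s + 1) ∂μ :=
  padic_As_lower_bound_general p N s μ
end

section
/- For s ∈ (0,1), there exists a constant C_1 > 0 such that for all ξ ∈ Q_p with |ξ|_p ≥ p^{-N+1}, A_s(ξ) = ∫_{B_N} |χ(zξ) - 1|^2 / |z|_p^{2s+1} dz ≤ C_1 |ξ|_p^{2s}. -/
open MeasureTheory Filter Topology

/-!
The integrand vanishes where `‖z ξ‖ ≤ 1`, because `χ` is trivial on `ℤ_p`. On the shell
`‖z‖ = p^k` it is at most `4 p^{-k(2s+1)}`, and the shell lies in a ball of volume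
`p^k μ(ℤ_p)`, so only the shells with `p^k > ‖ξ‖⁻¹` contribute, each at most
`4 μ(ℤ_p) p^{-2sk}`: a geometric series whose first term is `O(‖ξ‖^{2s})`.
The volume of `‖z‖ ≤ p^k` comes from the modular character of multiplication by `p`, which
is `p⁻¹` because `ℤ_p` is the disjoint union of the `p` balls `j + pℤ_p`, `0 ≤ j < p`.
-/

theorem geom_sum_Icc_zpow_le {K : Type*} [Field K] [LinearOrder K] [IsStrictOrderedRing K]
    {x : K} (hx0 : 0 < x) (hx1 : x < 1) (a b : ℤ) :
    ∑ k ∈ Finset.Icc a b, x ^ k ≤ x ^ a / (1 - x) := by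
  rw [Int.Icc_eq_finset_map, Finset.sum_map]
  simp only [Function.Embedding.trans_apply, Nat.castEmbedding_apply, addLeftEmbedding_apply,
    zpow_add₀ hx0.ne', zpow_natCast, ← Finset.mul_sum, div_eq_mul_inv]
  have hgeom := geom_sum_Ico_le_of_lt_one hx0.le hx1 (m := 0) (n := (b + 1 - a).toNat)
  rw [← Finset.range_eq_Ico, pow_zero, one_div] at hgeom
  exact mul_le_mul_of_nonneg_left hgeom (zpow_nonneg hx0.le a)

namespace Padic

variable {p : ℕ} [hp : Fact p.Prime]

theorem rat_eq_zero_of_abs_lt_one_of_norm_le_one {r : ℚ} (hr : |r| < 1)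
    (hden : ∃ n : ℕ, (r * (p : ℚ) ^ n).den = 1) (hnorm : ‖(r : ℚ_[p])‖ ≤ 1) : r = 0 := by
  obtain ⟨n, hn⟩ := hden
  set a : ℤ := (r * (p : ℚ) ^ n).num
  have ha : (a : ℚ) = r * (p : ℚ) ^ n := (Rat.den_eq_one_iff _).mp hn
  have ha_norm : ‖(a : ℚ_[p])‖ ≤ (p : ℝ) ^ (-n : ℤ) := by
    have : (a : ℚ_[p]) = (r : ℚ_[p]) * (p : ℚ_[p]) ^ n := by exact_mod_cast ha
    rw [this, norm_mul, norm_p_pow]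
    exact mul_le_of_le_one_left (by positivity) hnorm
  obtain ⟨b, hb⟩ := (norm_int_le_pow_iff_dvd a n).mp ha_norm
  have hrb : r = b := by
    have hpn : (p : ℚ) ^ n ≠ 0 := pow_ne_zero _ (Nat.cast_ne_zero.mpr hp.out.ne_zero)
    apply mul_right_cancel₀ hpn
    rw [← ha, hb]
    push_cast
    ring
  have : |b| < 1 := by exact_mod_cast hrb ▸ hr
  rw [hrb, abs_lt] at *
  simp only [Int.cast_eq_zero]
  omega

theorem padicFract_eq_zero_of_norm_le_one {x : ℚ_[p]} (hx : ‖x‖ ≤ 1) : padicFract p x = 0 := by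
  have hex : ∃ r : ℚ, ‖x - (r : ℚ_[p])‖ ≤ 1 ∧ 0 ≤ r ∧ r < 1 ∧
      ∃ n : ℕ, (r * (p : ℚ) ^ n).den = 1 :=
    ⟨0, by simpa using hx, le_rfl, one_pos, 0, by simp⟩
  rw [padicFract, dif_pos hex]
  obtain ⟨hxr, hr0, hr1, hden⟩ := hex.choose_spec
  refine rat_eq_zero_of_abs_lt_one_of_norm_le_one (abs_lt.mpr ⟨by linarith, hr1⟩) hden ?_
  calc ‖(hex.choose : ℚ_[p])‖ = ‖x + -(x - hex.choose)‖ := by congr 1; ring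
    _ ≤ max ‖x‖ ‖-(x - hex.choose)‖ := IsUltrametricDist.norm_add_le_max _ _
    _ ≤ 1 := max_le hx (by rwa [norm_neg])

theorem padicChar_eq_one_of_norm_le_one {x : ℚ_[p]} (hx : ‖x‖ ≤ 1) : padicChar p x = 1 := by
  simp [padicChar, padicFract_eq_zero_of_norm_le_one hx]

theorem norm_padicChar (x : ℚ_[p]) : ‖padicChar p x‖ = 1 := by
  rw [padicChar, Complex.norm_exp]
  simp

theorem norm_padicChar_sub_one_le_two (x : ℚ_[p]) : ‖padicChar p x - 1‖ ≤ 2 := by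
  calc ‖padicChar p x - 1‖ ≤ ‖padicChar p x‖ + ‖(1 : ℂ)‖ := norm_sub_le _ _
    _ = 2 := by rw [norm_padicChar, norm_one]; norm_num

open Metric
open scoped Pointwise

theorem closedBall_one_eq_biUnion :
    closedBall (0 : ℚ_[p]) 1 = ⋃ j ∈ Finset.range p, closedBall (j : ℚ_[p]) (p : ℝ)⁻¹ := by
  ext y
  simp only [mem_closedBall, dist_eq_norm, sub_zero, Set.mem_iUnion, Finset.mem_range, exists_prop]
  constructor
  · intro hy
    let Y : ℤ_[p] := ⟨y, hy⟩
    obtain ⟨j, hjp, hj⟩ := PadicInt.exists_mem_range Y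
    refine ⟨j, hjp, ?_⟩
    rw [PadicInt.maximalIdeal_eq_span_p, ← pow_one (p : ℤ_[p]),
      ← PadicInt.norm_le_pow_iff_mem_span_pow, PadicInt.norm_def, PadicInt.coe_sub,
      PadicInt.coe_natCast] at hj
    simpa using hj
  · rintro ⟨j, -, hj⟩
    calc ‖y‖ = ‖(y - j) + j‖ := by rw [sub_add_cancel]
      _ ≤ max ‖y - j‖ ‖(j : ℚ_[p])‖ := IsUltrametricDist.norm_add_le_max _ _
      _ ≤ 1 := max_le (hj.trans (inv_le_one_of_one_le₀ (mod_cast hp.out.one_le)))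
          (by simpa using norm_int_le_one (p := p) j)

theorem pairwiseDisjoint_closedBall_natCast :
    (Finset.range p : Set ℕ).PairwiseDisjoint fun j ↦ closedBall (j : ℚ_[p]) (p : ℝ)⁻¹ := by
  intro i hi j hj hij
  refine Set.disjoint_left.mpr fun z hzi hzj ↦ hij ?_
  simp only [Finset.coe_range, Set.mem_Iio] at hi hj
  have hdist : ‖((i - j : ℤ) : ℚ_[p])‖ < 1 := by
    calc ‖((i - j : ℤ) : ℚ_[p])‖ = ‖(i - z) + (z - j : ℚ_[p])‖ := by push_cast; congr 1; ring
      _ ≤ max ‖(i : ℚ_[p]) - z‖ ‖z - j‖ := IsUltrametricDist.norm_add_le_max _ _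
      _ ≤ (p : ℝ)⁻¹ := max_le (by rwa [norm_sub_rev, ← dist_eq_norm]) (by rwa [← dist_eq_norm])
      _ < 1 := inv_lt_one_of_one_lt₀ (mod_cast hp.out.one_lt)
  have := Int.eq_zero_of_abs_lt_dvd (norm_intCast_lt_one_iff.mp hdist)
    (by rw [abs_lt]; constructor <;> omega)
  omega

variable (μ : Measure ℚ_[p]) [μ.IsAddHaarMeasure]

theorem measure_closedBall_one :
    μ (closedBall 0 1) = p * μ (closedBall 0 (p : ℝ)⁻¹) := by
  rw [closedBall_one_eq_biUnion, measure_biUnion_finset pairwiseDisjoint_closedBall_natCast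
    fun _ _ ↦ isClosed_closedBall.measurableSet]
  simp [Measure.addHaar_closedBall_center]

theorem measure_closedBall_one_ne_zero : μ (closedBall (0 : ℚ_[p]) 1) ≠ 0 :=
  ((IsUltrametricDist.isOpen_closedBall 0 one_ne_zero).measure_pos μ
    ⟨0, mem_closedBall_self zero_le_one⟩).ne'

theorem measure_closedBall_one_ne_top : μ (closedBall (0 : ℚ_[p]) 1) ≠ ⊤ :=
  (isCompact_closedBall 0 1).measure_lt_top.ne

theorem _root_.Units.smul_closedBall_zero {𝕜 : Type*} [NormedField 𝕜] (u : 𝕜ˣ) {r : ℝ}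
    (hr : 0 ≤ r) : u • closedBall (0 : 𝕜) r = closedBall 0 (‖(u : 𝕜)‖ * r) := by
  have h := smul_closedBall (u : 𝕜) (0 : 𝕜) hr
  rw [smul_zero] at h
  exact h

theorem distribHaarChar_p :
    distribHaarChar ℚ_[p] (Units.mk0 (p : ℚ_[p]) (mod_cast hp.out.ne_zero)) = (p : NNReal)⁻¹ := by
  refine distribHaarChar_eq_of_measure_smul_eq_mul (μ := Measure.addHaar)
    (measure_closedBall_one_ne_zero _) (measure_closedBall_one_ne_top _) ?_
  rw [Units.smul_closedBall_zero _ zero_le_one, Units.val_mk0, norm_p, mul_one,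
    measure_closedBall_one Measure.addHaar, ← mul_assoc,
    ENNReal.coe_inv (mod_cast hp.out.ne_zero), ENNReal.coe_natCast,
    ENNReal.inv_mul_cancel (mod_cast hp.out.ne_zero) (ENNReal.natCast_ne_top p), one_mul]

theorem measureReal_closedBall_zpow (k : ℤ) :
    μ.real (closedBall 0 ((p : ℝ) ^ k)) = (p : ℝ) ^ k * μ.real (closedBall 0 1) := by
  have h := distribHaarChar_mul μ ((Units.mk0 (p : ℚ_[p]) (mod_cast hp.out.ne_zero)) ^ (-k))
    (closedBall 0 1)
  rw [map_zpow, distribHaarChar_p, Units.smul_closedBall_zero _ zero_le_one,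
    Units.val_zpow_eq_zpow_val, Units.val_mk0, norm_zpow, norm_p, mul_one, inv_zpow', inv_zpow',
    neg_neg] at h
  rw [measureReal_def, measureReal_def, ← h, ENNReal.toReal_mul]
  simp

theorem norm_padicChar_mul_sub_one_sq_div_le {s : ℝ} {ξ z : ℚ_[p]} {m N : ℤ}
    (hξ : ‖ξ‖ = (p : ℝ) ^ m) (hz : ‖z‖ ≤ (p : ℝ) ^ N) :
    ‖padicChar p (z * ξ) - 1‖ ^ 2 / ‖z‖ ^ (2 * s + 1) ≤
      ∑ k ∈ Finset.Icc (1 - m) N,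
        (closedBall 0 ((p : ℝ) ^ k)).indicator (fun _ ↦ 4 / ((p : ℝ) ^ k) ^ (2 * s + 1)) z := by
  have hp1 : (1 : ℝ) < p := mod_cast hp.out.one_lt
  have hterm_nonneg : ∀ k ∈ Finset.Icc (1 - m) N,
      0 ≤ (closedBall 0 ((p : ℝ) ^ k)).indicator (fun _ ↦ 4 / ((p : ℝ) ^ k) ^ (2 * s + 1)) z :=
    fun k _ ↦ Set.indicator_nonneg (fun _ _ ↦ by positivity) z
  by_cases hsmall : ‖z‖ ≤ (p : ℝ) ^ (-m)
  · have hzξ : ‖z * ξ‖ ≤ 1 := by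
      rw [norm_mul, hξ]
      calc ‖z‖ * (p : ℝ) ^ m ≤ (p : ℝ) ^ (-m) * (p : ℝ) ^ m := by gcongr
        _ = 1 := by rw [← zpow_add₀ (by positivity), neg_add_cancel, zpow_zero]
    rw [padicChar_eq_one_of_norm_le_one hzξ, sub_self, norm_zero]
    simpa using Finset.sum_nonneg hterm_nonneg
  have hz0 : z ≠ 0 := by
    rintro rfl
    exact hsmall (by rw [norm_zero]; positivity)
  set k := -z.valuation
  have hzk : ‖z‖ = (p : ℝ) ^ k := norm_eq_zpow_neg_valuation hz0
  rw [hzk] at hsmall hz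
  have hk : k ∈ Finset.Icc (1 - m) N := by
    rw [not_le, zpow_lt_zpow_iff_right₀ hp1] at hsmall
    rw [zpow_le_zpow_iff_right₀ hp1] at hz
    exact Finset.mem_Icc.mpr ⟨by omega, hz⟩
  calc ‖padicChar p (z * ξ) - 1‖ ^ 2 / ‖z‖ ^ (2 * s + 1)
      ≤ 4 / ((p : ℝ) ^ k) ^ (2 * s + 1) := by
        rw [hzk]
        gcongr
        nlinarith [norm_padicChar_sub_one_le_two (z * ξ), norm_nonneg (padicChar p (z * ξ) - 1)]
    _ = (closedBall 0 ((p : ℝ) ^ k)).indicator (fun _ ↦ 4 / ((p : ℝ) ^ k) ^ (2 * s + 1)) z := by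
        rw [Set.indicator_of_mem (mem_closedBall_zero_iff.mpr hzk.le)]
    _ ≤ _ := Finset.single_le_sum hterm_nonneg hk

theorem setIntegral_closedBall_le_geom_sum (s : ℝ) {ξ : ℚ_[p]} {m : ℤ} (N : ℤ)
    (hξ : ‖ξ‖ = (p : ℝ) ^ m) :
    ∫ z in closedBall 0 ((p : ℝ) ^ N), ‖padicChar p (z * ξ) - 1‖ ^ 2 / ‖z‖ ^ (2 * s + 1) ∂μ ≤
      ∑ k ∈ Finset.Icc (1 - m) N, 4 * μ.real (closedBall 0 1) * ((p : ℝ) ^ (2 * s))⁻¹ ^ k := by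
  set g : ℚ_[p] → ℝ := fun z ↦ ∑ k ∈ Finset.Icc (1 - m) N,
    (closedBall 0 ((p : ℝ) ^ k)).indicator (fun _ ↦ 4 / ((p : ℝ) ^ k) ^ (2 * s + 1)) z
  have hterm_int (k : ℤ) : Integrable ((closedBall 0 ((p : ℝ) ^ k)).indicator
      fun _ ↦ 4 / ((p : ℝ) ^ k) ^ (2 * s + 1)) μ :=
    (integrable_indicator_iff measurableSet_closedBall).mpr
      (integrableOn_const measure_closedBall_lt_top.ne)
  have hg_int : Integrable g μ := integrable_finsetSum _ fun k _ ↦ hterm_int k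
  have hg_nonneg : 0 ≤ g := fun z ↦ Finset.sum_nonneg fun k _ ↦
    Set.indicator_nonneg (fun _ _ ↦ by positivity) z
  have hp0 : (0 : ℝ) < p := mod_cast hp.out.pos
  calc _ ≤ ∫ z in closedBall 0 ((p : ℝ) ^ N), g z ∂μ :=
        integral_mono_of_nonneg (ae_of_all _ fun z ↦ by positivity) hg_int.restrict
          (ae_restrict_of_forall_mem measurableSet_closedBall fun z hz ↦
            norm_padicChar_mul_sub_one_sq_div_le hξ (mem_closedBall_zero_iff.mp hz))
    _ ≤ ∫ z, g z ∂μ := setIntegral_le_integral hg_int (ae_of_all _ hg_nonneg)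
    _ = _ := by
        rw [integral_finsetSum _ fun k _ ↦ hterm_int k]
        refine Finset.sum_congr rfl fun k _ ↦ ?_
        rw [integral_indicator_const _ measurableSet_closedBall, smul_eq_mul,
          measureReal_closedBall_zpow, Real.rpow_add_one (by positivity),
          ← Real.rpow_zpow_comm hp0.le, inv_zpow]
        field_simp

end Padic

theorem padic_As_upper_bound_general (p : ℕ) [Fact p.Prime] (N : ℤ) (s : ℝ)
    (hs : s ∈ Set.Ioo (0 : ℝ) 1)
    (μ : Measure ℚ_[p]) [μ.IsAddHaarMeasure] :
    ∃ C₁ : ℝ, 0 < C₁ ∧ ∀ ξ : ℚ_[p], (p : ℝ) ^ (-N + 1) ≤ ‖ξ‖ →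
      (∫ z in {z : ℚ_[p] | ‖z‖ ≤ (p : ℝ) ^ N},
          ‖padicChar p (z * ξ) - 1‖ ^ 2 / ‖z‖ ^ (2 * s + 1) ∂μ) ≤ C₁ * ‖ξ‖ ^ (2 * s) := by
  have hp1 : (1 : ℝ) < p := mod_cast (Fact.out : p.Prime).one_lt
  set r := ((p : ℝ) ^ (2 * s))⁻¹
  have hr0 : 0 < r := by positivity
  have hr1 : r < 1 := inv_lt_one_of_one_lt₀ (Real.one_lt_rpow hp1 (by linarith [hs.1]))
  set V := μ.real (Metric.closedBall 0 1)
  have hV : 0 < V := ENNReal.toReal_pos (Padic.measure_closedBall_one_ne_zero μ)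
    (Padic.measure_closedBall_one_ne_top μ)
  refine ⟨4 * V * r / (1 - r), by have := sub_pos.mpr hr1; positivity, fun ξ hξ ↦ ?_⟩
  have hξ0 : ξ ≠ 0 := by
    rintro rfl
    exact (norm_zero (E := ℚ_[p]) ▸ hξ).not_gt (by positivity)
  have hnorm := Padic.norm_eq_zpow_neg_valuation hξ0
  have hball : {z : ℚ_[p] | ‖z‖ ≤ (p : ℝ) ^ N} = Metric.closedBall 0 ((p : ℝ) ^ N) := by
    ext; simp
  calc _ ≤ ∑ k ∈ Finset.Icc (1 - -ξ.valuation) N, 4 * V * r ^ k :=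
        hball ▸ Padic.setIntegral_closedBall_le_geom_sum μ s N hnorm
    _ ≤ 4 * V * (r ^ (1 - -ξ.valuation) / (1 - r)) := by
        rw [← Finset.mul_sum]
        exact mul_le_mul_of_nonneg_left (geom_sum_Icc_zpow_le hr0 hr1 _ _) (by positivity)
    _ = 4 * V * r / (1 - r) * ‖ξ‖ ^ (2 * s) := by
        rw [hnorm, ← Real.rpow_zpow_comm (by positivity), zpow_sub₀ hr0.ne', zpow_one,
          inv_zpow', neg_neg, zpow_neg]
        ring

/-- Upper bound for `A_s(ξ)`: there is `C₁ > 0` such that for all `ξ` with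
`|ξ|_p ≥ p^{-N+1}`, `A_s(ξ) = ∫_{B_N} |χ(zξ)-1|²/|z|_p^{2s+1} dz ≤ C₁ |ξ|_p^{2s}`. -/
theorem padic_As_upper_bound (p : ℕ) [Fact p.Prime] (N : ℤ) (s : ℝ)
    (hs : s ∈ Set.Ioo (0 : ℝ) 1)
    (μ : Measure ℚ_[p]) [μ.IsAddHaarMeasure] (hμ : μ {x : ℚ_[p] | ‖x‖ ≤ 1} = 1) :
    ∃ C₁ : ℝ, 0 < C₁ ∧ ∀ ξ : ℚ_[p], (p : ℝ) ^ (-N + 1) ≤ ‖ξ‖ →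
      (∫ z in {z : ℚ_[p] | ‖z‖ ≤ (p : ℝ) ^ N},
          ‖padicChar p (z * ξ) - 1‖ ^ 2 / ‖z‖ ^ (2 * s + 1) ∂μ) ≤ C₁ * ‖ξ‖ ^ (2 * s) :=
  padic_As_upper_bound_general p N s hs μ
end

section
/- Let j : ℝ → [0,∞] be convex, lower semicontinuous with j(0) = 0 and j(r)/|r| → ∞ as |r| → ∞, and let η be a maximal monotone graph in ℝ × ℝ with 0 ∈ η(0) whose inverse is ∂j. Let g_n, w_n be measurable functions on a finite measure space X with g_n(x) ∈ η(w_n(x)) a.e., w_n → w a.e., and ∫_X g_n w_n dμ ≤ C for all n. Then ∫_X j(g_n) dμ ≤ C for all n, and consequently some subsequence of (g_n) converges weakly in L^1(X). -/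
/-!
Taking `v = 0` in the subdifferential inequality defining `(w, g) ∈ η` gives
`j (g n) ≤ g n * w n`, so `∫ j (g n) ≤ C`. Since `j` is superlinear, this bound makes `(g n)`
uniformly integrable (de la Vallée Poussin), and a uniformly integrable sequence on a finite
measure space has a weakly convergent subsequence (Dunford–Pettis).

For Dunford–Pettis, the truncations of `g n` at every height `m` are bounded in `L²`, so a single
diagonal subsequence converges weakly in `L²` at every height. Uniform integrability makes the
truncations at height `m` uniformly `L¹`-close to the `g n`; hence their weak limits form an
`L¹`-Cauchy sequence, and its `L¹` limit is the weak limit of the subsequence of `(g n)`.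
-/

open MeasureTheory Filter Topology ProbabilityTheory
open scoped ENNReal NNReal

theorem exists_subseq_forall_tendsto_of_abs_le {ι : Type*} [Countable ι] (u : ι → ℕ → ℝ)
    (b : ι → ℝ) (hu : ∀ i k, |u i k| ≤ b i) :
    ∃ φ : ℕ → ℕ, StrictMono φ ∧ ∀ i, ∃ a, Tendsto (fun k => u i (φ k)) atTop (𝓝 a) := by
  have hcpt : IsCompact (Set.univ.pi fun i => Set.Icc (-b i) (b i)) :=
    isCompact_univ_pi fun _ => isCompact_Icc
  obtain ⟨a, -, φ, hφ, ha⟩ := hcpt.tendsto_subseq (x := fun k i => u i k)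
    fun k => Set.mem_univ_pi.2 fun i => abs_le.1 (hu i k)
  exact ⟨φ, hφ, fun i => ⟨a i, ((continuous_apply i).tendsto a).comp ha⟩⟩

theorem isClosed_setOf_cauchySeq_of_lipschitzWith {X Y : Type*} [PseudoMetricSpace X]
    [PseudoMetricSpace Y] {K : ℝ≥0} {u : ℕ → X → Y} (hu : ∀ k, LipschitzWith K (u k)) :
    IsClosed {y | CauchySeq fun k => u k y} := by
  refine isClosed_iff_clusterPt.2 fun y hy => Metric.cauchySeq_iff.2 fun ε hε => ?_
  obtain ⟨z, hz, hyz⟩ := Metric.mem_closure_iff.1 (mem_closure_iff_clusterPt.2 hy)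
    (ε / (3 * (K + 1))) (by positivity)
  obtain ⟨N, hN⟩ := Metric.cauchySeq_iff.1 hz (ε / 3) (by positivity)
  have hclose (k : ℕ) : dist (u k y) (u k z) < ε / 3 := calc
    dist (u k y) (u k z) ≤ K * dist y z := (hu k).dist_le_mul y z
    _ ≤ (K + 1) * dist y z := by gcongr; linarith
    _ < (K + 1) * (ε / (3 * (K + 1))) := by gcongr
    _ = ε / 3 := by field_simp
  refine ⟨N, fun m hm n hn => ?_⟩
  calc dist (u m y) (u n y)
      ≤ dist (u m y) (u m z) + dist (u m z) (u n z) + dist (u n z) (u n y) :=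
        dist_triangle4 _ _ _ _
    _ < ε / 3 + ε / 3 + ε / 3 := by
        gcongr
        · exact hclose m
        · exact hN m hm n hn
        · rw [dist_comm]; exact hclose n
    _ = ε := by ring

section Hilbert

variable {H : Type*} [NormedAddCommGroup H] [InnerProductSpace ℝ H] [CompleteSpace H]

theorem exists_tendsto_inner_of_forall_exists_tendsto {x : ℕ → H}
    (hx : ∀ y, ∃ L, Tendsto (fun k => inner ℝ (x k) y) atTop (𝓝 L)) :
    ∃ G : H, ∀ y, Tendsto (fun k => inner ℝ (x k) y) atTop (𝓝 (inner ℝ G y)) := by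
  choose L hL using hx
  let ℓ : H →L[ℝ] ℝ :=
    continuousLinearMapOfTendsto (fun k => innerSL ℝ (x k)) (tendsto_pi_nhds.2 hL)
  refine ⟨(InnerProductSpace.toDual ℝ H).symm ℓ, fun y => ?_⟩
  rw [InnerProductSpace.toDual_symm_apply]
  exact hL y

theorem cauchySeq_inner_of_forall_mem {x : ℕ → H} {B : ℝ} (hB : ∀ k, ‖x k‖ ≤ B) {s : Set H}
    (hxs : ∀ k, x k ∈ s) (hs : ∀ y ∈ s, CauchySeq fun k => inner ℝ (x k) y) (y : H) :
    CauchySeq fun k => inner ℝ (x k) y := by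
  let S : Submodule ℝ H :=
    { carrier := {y | CauchySeq fun k => inner ℝ (x k) y}
      add_mem' := fun {y z} (hy : CauchySeq _) (hz : CauchySeq _) => by
        simp_rw [Set.mem_ofPred_eq, inner_add_right]
        exact hy.add hz
      zero_mem' := by simpa only [Set.mem_ofPred_eq, inner_zero_right] using cauchySeq_const 0
      smul_mem' := fun c y (hy : CauchySeq _) => by
        simp_rw [Set.mem_ofPred_eq, real_inner_smul_right]
        exact (uniformContinuous_const_smul c).comp_cauchySeq hy }
  have hS : IsClosed (S : Set H) :=
    isClosed_setOf_cauchySeq_of_lipschitzWith (K := B.toNNReal) fun k =>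
      (innerSL ℝ (x k)).lipschitz.weaken <| by
        rw [← NNReal.coe_le_coe, coe_nnnorm, innerSL_apply_norm, Real.coe_toNNReal']
        exact (hB k).trans (le_max_left _ _)
  -- `S` contains the closed span `V` of `s`, and also `Vᗮ` because every `x k` lies in `V`.
  let V : Submodule ℝ H := (Submodule.span ℝ s).topologicalClosure
  have hVS : V ≤ S := Submodule.topologicalClosure_minimal _ (Submodule.span_le.2 hs) hS
  have hVperp : Vᗮ ≤ S := fun z hz => by
    have hzero (k : ℕ) : inner ℝ (x k) z = 0 := (Submodule.mem_orthogonal V z).1 hz _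
      (Submodule.le_topologicalClosure _ (Submodule.subset_span (hxs k)))
    simpa [S, hzero] using cauchySeq_const (0 : ℝ)
  have : CompleteSpace V := (Submodule.isClosed_topologicalClosure _).completeSpace_coe
  exact sup_le hVS hVperp (V.sup_orthogonal_of_hasOrthogonalProjection ▸ Submodule.mem_top)

theorem exists_subseq_tendsto_inner {B : ℕ → ℝ} (f : ℕ → ℕ → H) (hB : ∀ m n, ‖f m n‖ ≤ B m) :
    ∃ φ : ℕ → ℕ, StrictMono φ ∧ ∀ m, ∃ G : H, ∀ y,
      Tendsto (fun k => inner ℝ (f m (φ k)) y) atTop (𝓝 (inner ℝ G y)) := by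
  obtain ⟨φ, hφ, hconv⟩ := exists_subseq_forall_tendsto_of_abs_le
    (fun (p : ℕ × (ℕ × ℕ)) k => inner ℝ (f p.1 k) (f p.2.1 p.2.2))
    (fun p => B p.1 * ‖f p.2.1 p.2.2‖) fun p k =>
      (abs_real_inner_le_norm _ _).trans (by gcongr; exact hB _ _)
  refine ⟨φ, hφ, fun m => exists_tendsto_inner_of_forall_exists_tendsto fun y =>
    cauchySeq_tendsto_of_complete <| cauchySeq_inner_of_forall_mem (fun k => hB m (φ k))
      (s := Set.range fun p : ℕ × ℕ => f p.1 p.2) (fun k => ⟨(m, φ k), rfl⟩) ?_ y⟩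
  rintro _ ⟨p, rfl⟩
  obtain ⟨a, ha⟩ := hconv (m, p)
  exact ha.cauchySeq

end Hilbert

theorem enorm_sub_truncation_le_indicator {X : Type*} {f : X → ℝ} {K : ℝ≥0} {A : ℝ}
    (hKA : (K : ℝ) ≤ A) (x : X) :
    ‖f x - truncation f A x‖ₑ ≤ ‖{x | K ≤ ‖f x‖₊}.indicator f x‖ₑ := by
  by_cases hx : f x ∈ Set.Ioc (-A) A
  · simp [truncation, Set.indicator_of_mem hx]
  · have hK : K ≤ ‖f x‖₊ := by
      rw [← NNReal.coe_le_coe, coe_nnnorm, Real.norm_eq_abs]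
      refine hKA.trans ?_
      rw [Set.mem_Ioc, not_and_or, not_lt, not_le] at hx
      rcases hx with hx | hx
      · rw [abs_of_nonpos (by linarith)]; linarith
      · rw [abs_of_pos (by linarith)]; exact hx.le
    simp [truncation, Set.indicator_of_notMem hx,
      Set.indicator_of_mem (show x ∈ {x | K ≤ ‖f x‖₊} from hK)]

section WeakL1

variable {X : Type*} [MeasurableSpace X] {μ : Measure X}

def TendstoWeaklyL1 (μ : Measure X) (f : ℕ → X → ℝ) (G : X → ℝ) : Prop :=
  ∀ v : X → ℝ, Measurable v → (∃ M : ℝ, ∀ x, |v x| ≤ M) →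
    Tendsto (fun k => ∫ x, f k x * v x ∂μ) atTop (𝓝 (∫ x, G x * v x ∂μ))

theorem abs_integral_mul_sub_integral_mul_le {a b v : X → ℝ} {M : ℝ} (ha : Integrable a μ)
    (hb : Integrable b μ) (hv : AEStronglyMeasurable v μ) (hM : ∀ x, |v x| ≤ M) :
    |∫ x, a x * v x ∂μ - ∫ x, b x * v x ∂μ| ≤ M * ∫ x, |a x - b x| ∂μ := by
  have hbdd : ∀ᵐ x ∂μ, ‖v x‖ ≤ M := Eventually.of_forall hM
  have hav : Integrable (fun x => a x * v x) μ := ha.mul_bdd hv hbdd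
  have hbv : Integrable (fun x => b x * v x) μ := hb.mul_bdd hv hbdd
  rw [← integral_sub hav hbv, ← integral_const_mul M fun x => |a x - b x|]
  refine norm_integral_le_of_norm_le (f := fun x => a x * v x - b x * v x)
    ((ha.sub hb).abs.const_mul M) (Eventually.of_forall fun x => ?_)
  rw [Real.norm_eq_abs, ← sub_mul, abs_mul, mul_comm]
  exact mul_le_mul_of_nonneg_right (hM x) (abs_nonneg _)

theorem TendstoWeaklyL1.sub {f f' : ℕ → X → ℝ} {G G' : X → ℝ}
    (hf : ∀ k, Integrable (f k) μ) (hf' : ∀ k, Integrable (f' k) μ)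
    (hG : Integrable G μ) (hG' : Integrable G' μ)
    (h : TendstoWeaklyL1 μ f G) (h' : TendstoWeaklyL1 μ f' G') :
    TendstoWeaklyL1 μ (f - f') (G - G') := by
  rintro v hv ⟨M, hM⟩
  have hmul (a : X → ℝ) (ha : Integrable a μ) : Integrable (fun x => a x * v x) μ :=
    ha.mul_bdd hv.aestronglyMeasurable (Eventually.of_forall hM)
  simp only [Pi.sub_apply, sub_mul]
  simp only [integral_sub (hmul _ (hf _)) (hmul _ (hf' _)), integral_sub (hmul _ hG) (hmul _ hG')]
  exact (h v hv ⟨M, hM⟩).sub (h' v hv ⟨M, hM⟩)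

theorem integral_abs_le_of_tendstoWeaklyL1 {h : ℕ → X → ℝ} {H : X → ℝ} {c : ℝ}
    (hh : ∀ k, Integrable (h k) μ) (hH : Measurable H) (hlim : TendstoWeaklyL1 μ h H)
    (hc : ∀ k, ∫ x, |h k x| ∂μ ≤ c) : ∫ x, |H x| ∂μ ≤ c := by
  set v : X → ℝ := fun x => if 0 ≤ H x then 1 else -1
  have hv : Measurable v :=
    Measurable.ite (measurableSet_le measurable_const hH) measurable_const measurable_const
  have hv1 (x : X) : |v x| ≤ 1 := by simp only [v]; split_ifs <;> simp
  have hHv (x : X) : H x * v x = |H x| := by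
    simp only [v]; split_ifs with hx
    · rw [mul_one, abs_of_nonneg hx]
    · rw [mul_neg_one, abs_of_neg (not_le.1 hx)]
  simp_rw [← hHv]
  refine le_of_tendsto' (hlim v hv ⟨1, hv1⟩) fun k => (le_abs_self _).trans ?_
  refine (norm_integral_le_of_norm_le (f := fun x => h k x * v x) (hh k).abs
    (Eventually.of_forall fun x => ?_)).trans (hc k)
  rw [Real.norm_eq_abs, abs_mul]
  exact mul_le_of_le_one_right (abs_nonneg _) (hv1 x)

theorem integral_abs_sub_le_of_tendstoWeaklyL1 {a b b' : ℕ → X → ℝ} {G G' : X → ℝ} {ε ε' : ℝ}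
    (ha : ∀ k, Integrable (a k) μ) (hb : ∀ k, Integrable (b k) μ)
    (hb' : ∀ k, Integrable (b' k) μ) (hG : Integrable G μ) (hG' : Integrable G' μ)
    (hGm : Measurable G) (hGm' : Measurable G')
    (hbG : TendstoWeaklyL1 μ b G) (hbG' : TendstoWeaklyL1 μ b' G')
    (hab : ∀ k, ∫ x, |a k x - b k x| ∂μ ≤ ε) (hab' : ∀ k, ∫ x, |a k x - b' k x| ∂μ ≤ ε') :
    ∫ x, |G x - G' x| ∂μ ≤ ε + ε' := by
  refine integral_abs_le_of_tendstoWeaklyL1 (fun k => (hb k).sub (hb' k)) (hGm.sub hGm')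
    (hbG.sub hb hb' hG hG' hbG') fun k => ?_
  calc ∫ x, |(b k - b' k) x| ∂μ
      ≤ ∫ x, (|a k x - b k x| + |a k x - b' k x|) ∂μ :=
        integral_mono ((hb k).sub (hb' k)).abs
          (((ha k).sub (hb k)).abs.add ((ha k).sub (hb' k)).abs) fun x => by
            simpa only [Pi.sub_apply, abs_sub_comm (b k x)] using abs_sub_le (b k x) (a k x) (b' k x)
    _ = ∫ x, |a k x - b k x| ∂μ + ∫ x, |a k x - b' k x| ∂μ :=
        integral_add ((ha k).sub (hb k)).abs ((ha k).sub (hb' k)).abs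
    _ ≤ ε + ε' := add_le_add (hab k) (hab' k)

theorem dist_toL1_eq_integral_abs {a b : X → ℝ} (ha : Integrable a μ) (hb : Integrable b μ) :
    dist (ha.toL1 a) (hb.toL1 b) = ∫ x, |a x - b x| ∂μ := by
  rw [dist_eq_norm, ← Integrable.toL1_sub, L1.norm_eq_integral_norm]
  refine integral_congr_ae ?_
  filter_upwards [(ha.sub hb).coeFn_toL1] with x hx
  rw [hx, Real.norm_eq_abs, Pi.sub_apply]

theorem exists_integrable_tendsto_integral_abs_sub {G : ℕ → X → ℝ}
    (hG : ∀ m, Integrable (G m) μ)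
    (hcauchy : ∀ ε > 0, ∃ m₀, ∀ m ≥ m₀, ∀ m' ≥ m₀, ∫ x, |G m x - G m' x| ∂μ ≤ ε) :
    ∃ G' : X → ℝ, Integrable G' μ ∧
      Tendsto (fun m => ∫ x, |G m x - G' x| ∂μ) atTop (𝓝 0) := by
  have hseq : CauchySeq fun m => (hG m).toL1 (G m) := Metric.cauchySeq_iff'.2 fun ε hε => by
    obtain ⟨m₀, hm₀⟩ := hcauchy (ε / 2) (half_pos hε)
    refine ⟨m₀, fun m hm => ?_⟩
    rw [dist_toL1_eq_integral_abs]
    exact (hm₀ m hm m₀ le_rfl).trans_lt (half_lt_self hε)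
  obtain ⟨F, hF⟩ := cauchySeq_tendsto_of_complete hseq
  refine ⟨F, L1.integrable_coeFn F, ?_⟩
  have hdist := tendsto_iff_dist_tendsto_zero.1 hF
  rw [← Integrable.toL1_coeFn F (L1.integrable_coeFn F)] at hdist
  simpa only [dist_toL1_eq_integral_abs] using hdist

theorem exists_tendstoWeaklyL1_of_approx {a : ℕ → X → ℝ} {b : ℕ → ℕ → X → ℝ} {G : ℕ → X → ℝ}
    (ha : ∀ k, Integrable (a k) μ) (hb : ∀ m k, Integrable (b m k) μ)
    (hG : ∀ m, Integrable (G m) μ) (hGm : ∀ m, Measurable (G m))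
    (hbG : ∀ m, TendstoWeaklyL1 μ (b m) (G m))
    (happrox : ∀ ε > 0, ∃ m₀, ∀ m ≥ m₀, ∀ k, ∫ x, |a k x - b m k x| ∂μ ≤ ε) :
    ∃ G' : X → ℝ, Integrable G' μ ∧ TendstoWeaklyL1 μ a G' := by
  obtain ⟨G', hG', hlim⟩ := exists_integrable_tendsto_integral_abs_sub hG fun ε hε => by
    obtain ⟨m₀, hm₀⟩ := happrox (ε / 2) (half_pos hε)
    refine ⟨m₀, fun m hm m' hm' => ?_⟩
    simpa only [add_halves] using integral_abs_sub_le_of_tendstoWeaklyL1 ha (hb m) (hb m')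
      (hG m) (hG m') (hGm m) (hGm m') (hbG m) (hbG m') (hm₀ m hm) (hm₀ m' hm')
  refine ⟨G', hG', ?_⟩
  rintro v hv ⟨M, hM⟩
  have hbound {c d : X → ℝ} (hc : Integrable c μ) (hd : Integrable d μ) :=
    abs_integral_mul_sub_integral_mul_le hc hd hv.aestronglyMeasurable
      fun x => (hM x).trans (le_abs_self M)
  refine TendstoUniformly.tendsto_of_eventually_tendsto (p := atTop)
    (F := fun m k => ∫ x, b m k x * v x ∂μ) (L := fun m => ∫ x, G m x * v x ∂μ) ?_
    (Eventually.of_forall fun m => hbG m v hv ⟨M, hM⟩) ?_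
  · refine Metric.tendstoUniformly_iff.2 fun ε hε => ?_
    obtain ⟨m₀, hm₀⟩ := happrox (ε / (|M| + 1)) (by positivity)
    filter_upwards [eventually_ge_atTop m₀] with m hm k
    calc dist (∫ x, a k x * v x ∂μ) (∫ x, b m k x * v x ∂μ)
        ≤ |M| * ∫ x, |a k x - b m k x| ∂μ := hbound (ha k) (hb m k)
      _ ≤ |M| * (ε / (|M| + 1)) := by gcongr; exact hm₀ m hm k
      _ < ε := by
          rw [mul_div_assoc', div_lt_iff₀ (by positivity)]
          nlinarith [abs_nonneg M]
  · rw [tendsto_iff_norm_sub_tendsto_zero]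
    refine squeeze_zero (fun _ => norm_nonneg _) (fun m => hbound (hG m) hG') ?_
    simpa using hlim.const_mul |M|

theorem tendstoWeaklyL1_of_tendsto_inner [IsFiniteMeasure μ] {f : ℕ → X → ℝ}
    (hf : ∀ k, MemLp (f k) 2 μ) {G : Lp ℝ 2 μ}
    (h : ∀ y : Lp ℝ 2 μ, Tendsto (fun k => inner ℝ ((hf k).toLp (f k)) y) atTop
      (𝓝 (inner ℝ G y))) :
    TendstoWeaklyL1 μ f G := by
  rintro v hv ⟨M, hM⟩
  have hv2 : MemLp v 2 μ := MemLp.of_bound hv.aestronglyMeasurable M (Eventually.of_forall hM)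
  have hinner (F : X → ℝ) (F' : Lp ℝ 2 μ) (hF : F' =ᵐ[μ] F) :
      inner ℝ F' (hv2.toLp v) = ∫ x, F x * v x ∂μ := by
    rw [L2.inner_def]
    refine integral_congr_ae ?_
    filter_upwards [hF, hv2.coeFn_toLp] with x hx hvx
    rw [hx, hvx, real_inner_eq_re_inner, RCLike.inner_apply, conj_trivial, mul_comm]
    rfl
  have := h (hv2.toLp v)
  rwa [hinner _ G EventuallyEq.rfl, funext fun k => hinner _ _ (hf k).coeFn_toLp] at this

theorem MeasureTheory.UniformIntegrable.exists_integral_abs_sub_truncation_le {ι : Type*}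
    [IsFiniteMeasure μ] {f : ι → X → ℝ} (hf : UniformIntegrable f 1 μ) {ε : ℝ} (hε : 0 < ε) :
    ∃ m₀ : ℕ, ∀ m ≥ m₀, ∀ i, ∫ x, |f i x - truncation (f i) m x| ∂μ ≤ ε := by
  obtain ⟨K, hK⟩ := hf.spec one_ne_zero ENNReal.one_ne_top hε
  refine ⟨⌈(K : ℝ)⌉₊, fun m hm i => ?_⟩
  have hKm : (K : ℝ) ≤ m := (Nat.le_ceil _).trans (Nat.cast_le.2 hm)
  have hint : Integrable (f i - truncation (f i) m) μ :=
    ((hf.memLp i).integrable le_rfl).sub (hf.aestronglyMeasurable i).integrable_truncation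
  rw [← ENNReal.ofReal_le_ofReal_iff hε.le]
  calc ENNReal.ofReal (∫ x, |f i x - truncation (f i) m x| ∂μ)
      = ∫⁻ x, ‖f i x - truncation (f i) m x‖ₑ ∂μ :=
        ofReal_integral_norm_eq_lintegral_enorm hint
    _ ≤ ∫⁻ x, ‖{x | K ≤ ‖f i x‖₊}.indicator (f i) x‖ₑ ∂μ :=
        lintegral_mono fun x => enorm_sub_truncation_le_indicator hKm x
    _ ≤ ENNReal.ofReal ε := by rw [← eLpNorm_one_eq_lintegral_enorm]; exact hK i

theorem MeasureTheory.UniformIntegrable.exists_subseq_tendstoWeaklyL1 [IsFiniteMeasure μ]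
    {f : ℕ → X → ℝ} (hf : UniformIntegrable f 1 μ) :
    ∃ φ : ℕ → ℕ, StrictMono φ ∧ ∃ G : X → ℝ, Integrable G μ ∧
      TendstoWeaklyL1 μ (fun k => f (φ k)) G := by
  have htrunc (m n : ℕ) : MemLp (truncation (f n) m) 2 μ :=
    (hf.aestronglyMeasurable n).memLp_truncation
  obtain ⟨φ, hφ, hweak⟩ := exists_subseq_tendsto_inner (fun m n => (htrunc m n).toLp _)
    (B := fun m => measureUnivNNReal μ ^ (2 : ℝ≥0∞).toReal⁻¹ * |(m : ℝ)|) fun m n =>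
      Lp.norm_le_of_ae_bound (abs_nonneg _) <| by
        filter_upwards [(htrunc m n).coeFn_toLp] with x hx
        rw [hx]
        exact abs_truncation_le_bound _ _ _
  choose G hG using hweak
  obtain ⟨G', hG', hlim⟩ := exists_tendstoWeaklyL1_of_approx
    (a := fun k => f (φ k)) (b := fun m k => truncation (f (φ k)) m) (G := fun m => G m)
    (fun k => (hf.memLp _).integrable le_rfl)
    (fun m k => (hf.aestronglyMeasurable _).integrable_truncation)
    (fun m => (Lp.memLp (G m)).integrable one_le_two)
    (fun m => (Lp.stronglyMeasurable (G m)).measurable)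
    (fun m => tendstoWeaklyL1_of_tendsto_inner (fun k => htrunc m (φ k)) (hG m))
    fun ε hε => (hf.exists_integral_abs_sub_truncation_le hε).imp fun m₀ h m hm k => h m hm (φ k)
  exact ⟨φ, hφ, G', hG', hlim⟩

theorem uniformIntegrable_of_superlinear_lintegral_le {ι : Type*} [IsFiniteMeasure μ]
    {j : ℝ → ℝ} (hsup : ∀ A : ℝ, 0 < A → ∃ R : ℝ, ∀ r : ℝ, R < |r| → A * |r| ≤ j r)
    {f : ι → X → ℝ} (hf : ∀ i, AEStronglyMeasurable (f i) μ) {C : ℝ≥0∞} (hC : C ≠ ∞)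
    (hbdd : ∀ i, ∫⁻ x, ENNReal.ofReal (j (f i x)) ∂μ ≤ C) : UniformIntegrable f 1 μ := by
  refine uniformIntegrable_of le_rfl ENNReal.one_ne_top hf fun ε hε => ?_
  set A := (C.toReal + 1) / ε
  have hA : 0 < A := by positivity
  obtain ⟨R, hR⟩ := hsup A hA
  refine ⟨R.toNNReal + 1, fun i => ?_⟩
  set tail := {x | R.toNNReal + 1 ≤ ‖f i x‖₊}.indicator (f i)
  have htail (x : X) : ‖tail x‖ₑ * ENNReal.ofReal A ≤ ENNReal.ofReal (j (f i x)) := by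
    by_cases hx : x ∈ {x | R.toNNReal + 1 ≤ ‖f i x‖₊}
    · rw [show tail x = f i x from Set.indicator_of_mem hx _, Real.enorm_eq_ofReal_abs,
        ← ENNReal.ofReal_mul (abs_nonneg _), mul_comm]
      refine ENNReal.ofReal_le_ofReal (hR _ ?_)
      have hx' : (R.toNNReal : ℝ) + 1 ≤ |f i x| := by exact_mod_cast hx.out
      linarith [Real.le_coe_toNNReal R]
    · simp [tail, Set.indicator_of_notMem hx]
  refine (ENNReal.mul_le_mul_iff_left (ENNReal.ofReal_pos.2 hA).ne' ENNReal.ofReal_ne_top).1 ?_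
  calc eLpNorm tail 1 μ * ENNReal.ofReal A = ∫⁻ x, ‖tail x‖ₑ * ENNReal.ofReal A ∂μ := by
        rw [eLpNorm_one_eq_lintegral_enorm, lintegral_mul_const' _ _ ENNReal.ofReal_ne_top]
    _ ≤ ∫⁻ x, ENNReal.ofReal (j (f i x)) ∂μ := lintegral_mono htail
    _ ≤ C := hbdd i
    _ ≤ ENNReal.ofReal ε * ENNReal.ofReal A := by
        rw [← ENNReal.ofReal_mul hε.le, mul_div_cancel₀ _ hε.ne']
        exact (ENNReal.ofReal_toReal hC).symm.le.trans (ENNReal.ofReal_le_ofReal (by linarith))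

end WeakL1

theorem weak_L1_compactness_of_monotone_graph_general {X : Type*} [MeasurableSpace X]
    (μ : Measure X) [IsFiniteMeasure μ]
    (j : ℝ → ℝ) (hj0 : ∀ r, 0 ≤ j r) (hj00 : j 0 = 0)
    (hsup : ∀ A : ℝ, 0 < A → ∃ R : ℝ, ∀ r : ℝ, R < |r| → A * |r| ≤ j r)
    (η : Set (ℝ × ℝ))
    (hinv : ∀ w g : ℝ, (w, g) ∈ η ↔ ∀ v : ℝ, j g + w * (v - g) ≤ j v)
    (g w : ℕ → X → ℝ) (hg : ∀ n, Measurable (g n))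
    (hgw : ∀ n, ∀ᵐ x ∂μ, (w n x, g n x) ∈ η)
    (C : ℝ) (hint : ∀ n, Integrable (fun x => g n x * w n x) μ)
    (hC : ∀ n, ∫ x, g n x * w n x ∂μ ≤ C) :
    (∀ n, ∫⁻ x, ENNReal.ofReal (j (g n x)) ∂μ ≤ ENNReal.ofReal C) ∧
    ∃ φ : ℕ → ℕ, StrictMono φ ∧ ∃ G : X → ℝ, Integrable G μ ∧
      ∀ v : X → ℝ, Measurable v → (∃ M : ℝ, ∀ x, |v x| ≤ M) →
        Tendsto (fun k => ∫ x, g (φ k) x * v x ∂μ) atTop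
          (nhds (∫ x, G x * v x ∂μ)) := by
  have hsubdiff (n : ℕ) : ∀ᵐ x ∂μ, j (g n x) ≤ g n x * w n x := by
    filter_upwards [hgw n] with x hx
    have := (hinv _ _).1 hx 0
    rw [hj00] at this
    linarith
  have hbound (n : ℕ) : ∫⁻ x, ENNReal.ofReal (j (g n x)) ∂μ ≤ ENNReal.ofReal C := calc
    ∫⁻ x, ENNReal.ofReal (j (g n x)) ∂μ ≤ ∫⁻ x, ENNReal.ofReal (g n x * w n x) ∂μ :=
      lintegral_mono_ae <| (hsubdiff n).mono fun x hx => ENNReal.ofReal_le_ofReal hx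
    _ = ENNReal.ofReal (∫ x, g n x * w n x ∂μ) := by
      refine (ofReal_integral_eq_lintegral_ofReal (hint n) ?_).symm
      filter_upwards [hsubdiff n] with x hx using (hj0 _).trans hx
    _ ≤ ENNReal.ofReal C := ENNReal.ofReal_le_ofReal (hC n)
  have hUI : UniformIntegrable g 1 μ := uniformIntegrable_of_superlinear_lintegral_le hsup
    (fun n => (hg n).aestronglyMeasurable) ENNReal.ofReal_ne_top hbound
  exact ⟨hbound, hUI.exists_subseq_tendstoWeaklyL1⟩

/-- If `η` is a maximal monotone graph in `ℝ × ℝ` with `0 ∈ η(0)` whose inverse is the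
subdifferential of a convex superlinear `j ≥ 0` with `j(0)=0`, and `g_n ∈ η(w_n)` a.e.,
`w_n → w` a.e., with `∫ g_n w_n dμ ≤ C`, then `∫ j(g_n) dμ ≤ C` for all `n` and a
subsequence of `(g_n)` converges weakly in `L¹`. -/
theorem weak_L1_compactness_of_monotone_graph {X : Type*} [MeasurableSpace X]
    (μ : Measure X) [IsFiniteMeasure μ]
    (j : ℝ → ℝ) (hj0 : ∀ r, 0 ≤ j r) (hjc : ConvexOn ℝ Set.univ j)
    (hjlsc : LowerSemicontinuous j) (hj00 : j 0 = 0)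
    (hsup : ∀ A : ℝ, 0 < A → ∃ R : ℝ, ∀ r : ℝ, R < |r| → A * |r| ≤ j r)
    (η : Set (ℝ × ℝ))
    (hmono : ∀ a ∈ η, ∀ b ∈ η, 0 ≤ (a.1 - b.1) * (a.2 - b.2))
    (hmax : ∀ c : ℝ × ℝ, (∀ a ∈ η, 0 ≤ (c.1 - a.1) * (c.2 - a.2)) → c ∈ η)
    (h00 : ((0 : ℝ), (0 : ℝ)) ∈ η)
    (hinv : ∀ w g : ℝ, (w, g) ∈ η ↔ ∀ v : ℝ, j g + w * (v - g) ≤ j v)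
    (g w : ℕ → X → ℝ) (hg : ∀ n, Measurable (g n)) (hwm : ∀ n, Measurable (w n))
    (W : X → ℝ)
    (hgw : ∀ n, ∀ᵐ x ∂μ, (w n x, g n x) ∈ η)
    (hconv : ∀ᵐ x ∂μ, Tendsto (fun n => w n x) atTop (nhds (W x)))
    (C : ℝ) (hint : ∀ n, Integrable (fun x => g n x * w n x) μ)
    (hC : ∀ n, ∫ x, g n x * w n x ∂μ ≤ C) :
    (∀ n, ∫⁻ x, ENNReal.ofReal (j (g n x)) ∂μ ≤ ENNReal.ofReal C) ∧
    ∃ φ : ℕ → ℕ, StrictMono φ ∧ ∃ G : X → ℝ, Integrable G μ ∧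
      ∀ v : X → ℝ, Measurable v → (∃ M : ℝ, ∀ x, |v x| ≤ M) →
        Tendsto (fun k => ∫ x, g (φ k) x * v x ∂μ) atTop
          (nhds (∫ x, G x * v x ∂μ)) :=
  weak_L1_compactness_of_monotone_graph_general μ j hj0 hj00 hsup η hinv g w hg hgw C hint hC
end

section
/- Let X be a set with a finite measure μ, j : ℝ → [0,∞] convex lower semicontinuous with j(0) = 0, and suppose u_n → u weakly in L^1(X, μ). Then ∫_X j(u) dμ ≤ liminf_n ∫_X j(u_n) dμ; in particular, the functional Ψ(u) = ∫_X j(u) dμ is weakly lower semicontinuous on L^1(X, μ). -/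
/-!
Separating the closed convex epigraph of `j` from points below it writes `j` as the supremum of
countably many affine minorants `s ↦ a s + b`; finite maxima of these are realized pointwise by
simple functions `(a(x), b(x))`. Since `a(x)` is bounded, `∫ a(x) uₙ + b(x)` converges to
`∫ a(x) u + b(x)` by weak convergence, and it is bounded by `∫ j(uₙ)`. Monotone convergence over
the finite maxima gives the bound for `∫ j(u)`.
-/

open MeasureTheory Filter Topology ENNReal

/-- Because of the truncation in `ENNReal.ofReal`, `(a, b)` belongs to this set iff
`(a s + b)⁺ ≤ j s` for all `s`, which for `j ≥ 0` is the usual notion of affine minorant. -/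
def affineMinorants (j : ℝ → ℝ≥0∞) : Set (ℝ × ℝ) :=
  {a | ∀ s, ENNReal.ofReal (a.1 * s + a.2) ≤ j s}

lemma zero_mem_affineMinorants (j : ℝ → ℝ≥0∞) : (0 : ℝ × ℝ) ∈ affineMinorants j := by
  simp [affineMinorants]

def realEpigraph (j : ℝ → ℝ≥0∞) : Set (ℝ × ℝ) :=
  {p | 0 ≤ p.2 ∧ j p.1 ≤ ENNReal.ofReal p.2}

section Epigraph

variable {j : ℝ → ℝ≥0∞}

lemma convex_realEpigraph
    (hjc : ∀ a b t : ℝ, 0 ≤ t → t ≤ 1 →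
      j (t * a + (1 - t) * b) ≤ ENNReal.ofReal t * j a + ENNReal.ofReal (1 - t) * j b) :
    Convex ℝ (realEpigraph j) := by
  rintro x ⟨hx0, hx⟩ y ⟨hy0, hy⟩ t t' ht ht' htt'
  obtain rfl : t' = 1 - t := by linarith
  refine ⟨by simp only [Prod.snd_add, Prod.smul_snd, smul_eq_mul]; positivity, ?_⟩
  simp only [Prod.fst_add, Prod.snd_add, Prod.smul_fst, Prod.smul_snd, smul_eq_mul]
  calc j (t * x.1 + (1 - t) * y.1)
      ≤ ENNReal.ofReal t * j x.1 + ENNReal.ofReal (1 - t) * j y.1 := hjc _ _ _ ht (by linarith)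
    _ ≤ ENNReal.ofReal t * ENNReal.ofReal x.2 + ENNReal.ofReal (1 - t) * ENNReal.ofReal y.2 := by
      gcongr
    _ = ENNReal.ofReal (t * x.2 + (1 - t) * y.2) := by
      rw [← ENNReal.ofReal_mul ht, ← ENNReal.ofReal_mul ht', ← ENNReal.ofReal_add (by positivity)
        (by positivity)]

lemma isClosed_realEpigraph (hjlsc : LowerSemicontinuous j) : IsClosed (realEpigraph j) :=
  (isClosed_le continuous_const continuous_snd).inter <| hjlsc.isClosed_epigraph.preimage <|
    continuous_fst.prodMk (ENNReal.continuous_ofReal.comp continuous_snd)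

variable (hjc : ∀ a b t : ℝ, 0 ≤ t → t ≤ 1 →
      j (t * a + (1 - t) * b) ≤ ENNReal.ofReal t * j a + ENNReal.ofReal (1 - t) * j b)
    (hjlsc : LowerSemicontinuous j) (hj0 : j 0 = 0)
include hjc hjlsc hj0

lemma exists_mem_affineMinorants_lt {s₀ c : ℝ} (hc : 0 ≤ c) (hcs : ENNReal.ofReal c < j s₀) :
    ∃ a ∈ affineMinorants j, c < a.1 * s₀ + a.2 := by
  obtain ⟨L, γ, hLx, hLepi⟩ := geometric_hahn_banach_point_closed (convex_realEpigraph hjc)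
    (isClosed_realEpigraph hjlsc) (x := (s₀, c)) fun h => hcs.not_ge h.2
  set α := L (1, 0)
  set β := L (0, 1)
  have hL : ∀ p : ℝ × ℝ, L p = p.1 * α + p.2 * β := fun p => by
    have hp : p = p.1 • ((1 : ℝ), (0 : ℝ)) + p.2 • ((0 : ℝ), (1 : ℝ)) := by ext <;> simp
    conv_lhs => rw [hp]
    rw [map_add, map_smul, map_smul, smul_eq_mul, smul_eq_mul]
  simp only [hL] at hLx hLepi
  have hvert : ∀ M : ℝ, 0 ≤ M → γ < M * β := fun M hM => by
    simpa using hLepi (0, M) ⟨hM, by simp [hj0]⟩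
  have hβ : 0 ≤ β := by
    by_contra! hβ
    have hγ : γ < 0 := by simpa using hvert 0 le_rfl
    simpa [div_mul_cancel₀ _ hβ.ne] using hvert (γ / β) (div_nonneg_of_nonpos hγ.le hβ.le)
  have hgap : β * c < γ - α * s₀ := by linarith
  have hden : 0 < β + (γ - α * s₀) := by nlinarith
  -- The separating line `α s + β t = γ` may be vertical (`β = 0`); the affine function
  -- `r (γ - α s)` lies below `j` as soon as `r β ≤ 1`, and this choice of `r` also puts it above `c`.
  set r := (c + 1) / (β + (γ - α * s₀))
  have hr : 0 < r := by positivity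
  have hrβ : r * β ≤ 1 := by
    rw [div_mul_eq_mul_div, div_le_one hden]; nlinarith
  refine ⟨(-(r * α), r * γ), fun t => ?_, ?_⟩
  · rcases eq_or_ne (j t) ⊤ with ht | ht
    · simp [ht]
    have hsep := hLepi (t, (j t).toReal) ⟨ENNReal.toReal_nonneg, (ENNReal.ofReal_toReal ht).ge⟩
    rw [← ENNReal.ofReal_toReal ht]
    refine ENNReal.ofReal_le_ofReal ?_
    dsimp only at hsep ⊢
    nlinarith [ENNReal.toReal_nonneg (a := j t)]
  · dsimp only
    rw [show -(r * α) * s₀ + r * γ = r * (γ - α * s₀) by ring, div_mul_eq_mul_div, lt_div_iff₀ hden]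
    nlinarith

/-- Taking the minorants from a dense sequence in `affineMinorants j` suffices, since
`a ↦ ENNReal.ofReal (a.1 * s + a.2)` is continuous. -/
lemma exists_seq_affineMinorants_iSup_eq :
    ∃ q : ℕ → ℝ × ℝ, (∀ k, q k ∈ affineMinorants j) ∧
      ∀ s, j s = ⨆ k, ENNReal.ofReal ((q k).1 * s + (q k).2) := by
  have : Nonempty (affineMinorants j) := ⟨⟨0, zero_mem_affineMinorants j⟩⟩
  obtain ⟨q, hq⟩ := TopologicalSpace.exists_dense_seq (affineMinorants j)
  refine ⟨fun k => q k, fun k => (q k).2, fun s => le_antisymm ?_ (iSup_le fun k => (q k).2 s)⟩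
  refine le_of_forall_lt fun c hc => ?_
  obtain ⟨r, hr0, hcr, hrs⟩ := ENNReal.lt_iff_exists_real_btwn.1 hc
  obtain ⟨a, ha, hra⟩ := exists_mem_affineMinorants_lt hjc hjlsc hj0 hr0 hrs
  have hdense : ENNReal.ofReal (a.1 * s + a.2) ≤ ⨆ k, ENNReal.ofReal ((q k).1.1 * s + (q k).1.2) :=
    hq.induction_on (p := fun b : affineMinorants j =>
        ENNReal.ofReal (b.1.1 * s + b.1.2) ≤ ⨆ k, ENNReal.ofReal ((q k).1.1 * s + (q k).1.2))
      ⟨a, ha⟩ (isClosed_le (ENNReal.continuous_ofReal.comp (by fun_prop)) continuous_const)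
      fun k => le_iSup_of_le k le_rfl
  exact hcr.trans_le ((ENNReal.ofReal_le_ofReal hra.le).trans hdense)

end Epigraph

lemma ofReal_integral_le_lintegral_ofReal {X : Type*} [MeasurableSpace X] {μ : Measure X}
    (f : X → ℝ) : ENNReal.ofReal (∫ x, f x ∂μ) ≤ ∫⁻ x, ENNReal.ofReal (f x) ∂μ := by
  by_cases hf : Integrable f μ
  · refine ENNReal.ofReal_le_of_le_toReal ?_
    rw [integral_eq_lintegral_pos_part_sub_lintegral_neg_part hf]
    exact sub_le_self _ ENNReal.toReal_nonneg
  · simp [integral_undef hf]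

namespace MeasureTheory.SimpleFunc

variable {X : Type*} [MeasurableSpace X]

lemma exists_isMaxOn_affine {u : X → ℝ} (hu : Measurable u) {F : Finset (ℝ × ℝ)}
    (hF : F.Nonempty) :
    ∃ p : SimpleFunc X (ℝ × ℝ), ∀ x, p x ∈ F ∧ IsMaxOn (fun a => a.1 * u x + a.2) F (p x) := by
  induction hF using Finset.Nonempty.cons_induction with
  | singleton a => exact ⟨const X a, fun x => by simp [isMaxOn_iff]⟩
  | cons a F ha hF ih =>
    obtain ⟨p, hp⟩ := ih
    have hS : MeasurableSet {x | (p x).1 * u x + (p x).2 < a.1 * u x + a.2} := by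
      have := p.measurable
      measurability
    refine ⟨(const X a).piecewise _ hS p, fun x => ?_⟩
    obtain ⟨hpF, hpmax⟩ := hp x
    simp only [isMaxOn_iff, Finset.mem_coe, Finset.mem_cons, forall_eq_or_imp] at hpmax ⊢
    rw [piecewise_apply]
    split_ifs with hx
    · exact ⟨Or.inl rfl, le_rfl, fun b hb => (hpmax b hb).trans hx.le⟩
    · exact ⟨Or.inr hpF, not_lt.1 hx, hpmax⟩

lemma integrable_fst_mul_add_snd {μ : Measure X} [IsFiniteMeasure μ] {u : X → ℝ}
    (p : SimpleFunc X (ℝ × ℝ)) (hu : Integrable u μ) :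
    Integrable (fun x => (p x).1 * u x + (p x).2) μ :=
  have ⟨_, hM⟩ := (p.map Prod.fst).exists_forall_norm_le
  (hu.bdd_mul (p.map Prod.fst).aestronglyMeasurable (ae_of_all _ hM)).add
    (p.map Prod.snd).integrable_of_isFiniteMeasure

end MeasureTheory.SimpleFunc

lemma lintegral_iSup_ofReal_affine_eq_iSup_finset {X : Type*} [MeasurableSpace X] {μ : Measure X}
    {u : X → ℝ} (hu : Measurable u) (q : ℕ → ℝ × ℝ) :
    ∫⁻ x, ⨆ k, ENNReal.ofReal ((q k).1 * u x + (q k).2) ∂μ =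
      ⨆ N : Finset ℕ, ∫⁻ x, (N.image q).sup (fun a => ENNReal.ofReal (a.1 * u x + a.2)) ∂μ := by
  have hfinset : ∀ x, ⨆ k, ENNReal.ofReal ((q k).1 * u x + (q k).2) =
      ⨆ N : Finset ℕ, (N.image q).sup fun a => ENNReal.ofReal (a.1 * u x + a.2) := fun x => by
    rw [iSup_eq_iSup_finset]
    exact iSup_congr fun N => by rw [Finset.sup_image, Finset.sup_eq_iSup]; rfl
  simp_rw [hfinset]
  refine lintegral_iSup_directed (fun N => ?_) ?_
  · simp only [Finset.sup_eq_iSup]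
    exact (Measurable.biSup _ (N.image q).countable_toSet fun a _ =>
      ENNReal.measurable_ofReal.comp (by fun_prop)).aemeasurable
  · exact Monotone.directed_le fun N N' h x => Finset.sup_mono (Finset.image_subset_image h)

section WeakConvergence

variable {X : Type*} [MeasurableSpace X] {μ : Measure X} [IsFiniteMeasure μ] {j : ℝ → ℝ≥0∞}
  {u : X → ℝ} {un : ℕ → X → ℝ} (hun : ∀ n, Integrable (un n) μ) (hu : Integrable u μ)
  (hweak : ∀ v : X → ℝ, Measurable v → (∃ M : ℝ, ∀ x, |v x| ≤ M) →
    Tendsto (fun n => ∫ x, un n x * v x ∂μ) atTop (𝓝 (∫ x, u x * v x ∂μ)))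
include hun hu hweak

lemma ofReal_integral_affine_le_liminf_lintegral (p : SimpleFunc X (ℝ × ℝ))
    (hp : ∀ x, p x ∈ affineMinorants j) :
    ENNReal.ofReal (∫ x, (p x).1 * u x + (p x).2 ∂μ) ≤
      liminf (fun n => ∫⁻ x, j (un n x) ∂μ) atTop := by
  obtain ⟨M, hM⟩ := (p.map Prod.fst).exists_forall_norm_le
  have hsplit : ∀ g : X → ℝ, Integrable g μ →
      ∫ x, (p x).1 * g x + (p x).2 ∂μ = ∫ x, g x * (p x).1 ∂μ + ∫ x, (p x).2 ∂μ := fun g hg => by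
    simp_rw [mul_comm _ (g _)]
    exact integral_add (hg.mul_bdd (p.map Prod.fst).aestronglyMeasurable (ae_of_all _ hM))
      (p.map Prod.snd).integrable_of_isFiniteMeasure
  have hlim : Tendsto (fun n => ∫ x, (p x).1 * un n x + (p x).2 ∂μ) atTop
      (𝓝 (∫ x, (p x).1 * u x + (p x).2 ∂μ)) := by
    simp only [hsplit _ (hun _), hsplit _ hu]
    exact (hweak _ (p.map Prod.fst).measurable ⟨M, hM⟩).add_const _
  calc ENNReal.ofReal (∫ x, (p x).1 * u x + (p x).2 ∂μ)
      = liminf (fun n => ENNReal.ofReal (∫ x, (p x).1 * un n x + (p x).2 ∂μ)) atTop :=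
        ((ENNReal.continuous_ofReal.tendsto _).comp hlim).liminf_eq.symm
    _ ≤ liminf (fun n => ∫⁻ x, j (un n x) ∂μ) atTop :=
        liminf_le_liminf <| Eventually.of_forall fun n =>
          (ofReal_integral_le_lintegral_ofReal _).trans (lintegral_mono fun x => hp x (un n x))

lemma lintegral_finsetSup_le_liminf_lintegral (hum : Measurable u) (F : Finset (ℝ × ℝ))
    (hF : ∀ a ∈ F, a ∈ affineMinorants j) :
    ∫⁻ x, F.sup (fun a => ENNReal.ofReal (a.1 * u x + a.2)) ∂μ ≤
      liminf (fun n => ∫⁻ x, j (un n x) ∂μ) atTop := by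
  obtain ⟨p, hp⟩ := SimpleFunc.exists_isMaxOn_affine hum (Finset.insert_nonempty 0 F)
  have hpF : ∀ x, p x ∈ affineMinorants j := fun x =>
    (Finset.mem_insert.1 (hp x).1).elim (· ▸ zero_mem_affineMinorants j) (hF _)
  have hmax : ∀ x, ∀ a ∈ insert 0 F, a.1 * u x + a.2 ≤ (p x).1 * u x + (p x).2 :=
    fun x => isMaxOn_iff.1 (hp x).2
  calc ∫⁻ x, F.sup (fun a => ENNReal.ofReal (a.1 * u x + a.2)) ∂μ
      ≤ ∫⁻ x, ENNReal.ofReal ((p x).1 * u x + (p x).2) ∂μ :=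
        lintegral_mono fun x => Finset.sup_le fun a ha =>
          ENNReal.ofReal_le_ofReal (hmax x a (Finset.mem_insert_of_mem ha))
    _ = ENNReal.ofReal (∫ x, (p x).1 * u x + (p x).2 ∂μ) :=
        (ofReal_integral_eq_lintegral_ofReal (p.integrable_fst_mul_add_snd hu)
          (ae_of_all _ fun x => by simpa using hmax x 0 (Finset.mem_insert_self 0 F))).symm
    _ ≤ liminf (fun n => ∫⁻ x, j (un n x) ∂μ) atTop :=
        ofReal_integral_affine_le_liminf_lintegral hun hu hweak p hpF

end WeakConvergence

/-- Weak lower semicontinuity of the convex integral functional `Ψ(u) = ∫ j(u) dμ` for a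
convex lower semicontinuous `j : ℝ → [0,∞]` with `j(0) = 0`: if `u_n → u` weakly in
`L¹(X,μ)` then `∫ j(u) dμ ≤ liminf_n ∫ j(u_n) dμ`. -/
theorem convex_integral_weakly_lsc {X : Type*} [MeasurableSpace X]
    (μ : Measure X) [IsFiniteMeasure μ]
    (j : ℝ → ℝ≥0∞)
    (hjc : ∀ a b t : ℝ, 0 ≤ t → t ≤ 1 →
      j (t * a + (1 - t) * b) ≤ ENNReal.ofReal t * j a + ENNReal.ofReal (1 - t) * j b)
    (hjlsc : LowerSemicontinuous j) (hj0 : j 0 = 0)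
    (u : X → ℝ) (un : ℕ → X → ℝ)
    (hun : ∀ n, Integrable (un n) μ) (hu : Integrable u μ)
    (hweak : ∀ v : X → ℝ, Measurable v → (∃ M : ℝ, ∀ x, |v x| ≤ M) →
      Tendsto (fun n => ∫ x, un n x * v x ∂μ) atTop (nhds (∫ x, u x * v x ∂μ))) :
    ∫⁻ x, j (u x) ∂μ ≤ liminf (fun n => ∫⁻ x, j (un n x) ∂μ) atTop := by
  set u' := hu.aemeasurable.mk u
  have huu' : u =ᵐ[μ] u' := hu.aemeasurable.ae_eq_mk
  have hweak' : ∀ v : X → ℝ, Measurable v → (∃ M : ℝ, ∀ x, |v x| ≤ M) →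
      Tendsto (fun n => ∫ x, un n x * v x ∂μ) atTop (𝓝 (∫ x, u' x * v x ∂μ)) := fun v hv hM =>
    integral_congr_ae (huu'.mul (ae_eq_refl v)) ▸ hweak v hv hM
  obtain ⟨q, hq, hjq⟩ := exists_seq_affineMinorants_iSup_eq hjc hjlsc hj0
  calc ∫⁻ x, j (u x) ∂μ
      = ∫⁻ x, j (u' x) ∂μ := lintegral_congr_ae (huu'.fun_comp j)
    _ = ⨆ N : Finset ℕ, ∫⁻ x, (N.image q).sup (fun a => ENNReal.ofReal (a.1 * u' x + a.2)) ∂μ := by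
        simp_rw [hjq]
        exact lintegral_iSup_ofReal_affine_eq_iSup_finset hu.aemeasurable.measurable_mk q
    _ ≤ liminf (fun n => ∫⁻ x, j (un n x) ∂μ) atTop := iSup_le fun N =>
        lintegral_finsetSup_le_liminf_lintegral hun (hu.congr huu') hweak'
          hu.aemeasurable.measurable_mk _ (by simpa using fun k _ => hq k)
end
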